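/- Suppose P ∈ ℂ^{n×n} is a Hermitian positive definite solution of the anti-Riccati equation −Q = A₂^H P^# A₂ − A₂^H P^# B₂ (R + B₂^H P^# B₂)^{-1} B₂^H P^# A₂ − P. Then the matrix X = Q₀^{-1/2} (P^{-1} + (A₂ Q^{-1} A₂^H)^# + (B₂ R^{-1} B₂^H)^#) Q₀^{-1/2} is Hermitian positive definite and satisfies the nonlinear matrix equation X + A^H X^{-#} A = I_n, where A = Q₀^{-#/2} A₂ Q^{-1} Q₀^{-1/2}. -/

import Mathlib

open Matrix Filter Topology
open scoped ENNReal ComplexOrder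

noncomputable section

/-- Entrywise complex conjugate of a matrix, `M^#`. -/
def mconj {k l : Type*} (A : Matrix k l ℂ) : Matrix k l ℂ := A.map (starRingEnd ℂ)

variable {n m : ℕ}

/-- The antilinear system `x(k+1) = A₂^# x^#(k) + B₂^# u^#(k)` is stabilizable if some
feedback `u(k) = K₁x(k) + K₂^#x^#(k)` drives every closed-loop solution to zero. -/
def AntiStabilizable (A₂ : Matrix (Fin n) (Fin n) ℂ) (B₂ : Matrix (Fin n) (Fin m) ℂ) :
    Prop :=
  ∃ K₁ K₂ : Matrix (Fin m) (Fin n) ℂ, ∀ x : ℕ → (Fin n → ℂ),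
    (∀ k : ℕ, x (k + 1) =
        mconj A₂ *ᵥ star (x k) + mconj B₂ *ᵥ star (K₁ *ᵥ x k + mconj K₂ *ᵥ star (x k))) →
    Tendsto x atTop (𝓝 0)

/-- The trajectory of the antilinear system `x(k+1) = A₂^# x^#(k) + B₂^# u^#(k)` from
the initial condition `x₀` under the control sequence `u`. -/
def atraj (A₂ : Matrix (Fin n) (Fin n) ℂ) (B₂ : Matrix (Fin n) (Fin m) ℂ)
    (x₀ : Fin n → ℂ) (u : ℕ → Fin m → ℂ) : ℕ → Fin n → ℂ
  | 0 => x₀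
  | k + 1 => mconj A₂ *ᵥ star (atraj A₂ B₂ x₀ u k) + mconj B₂ *ᵥ star (u k)

/-- The quadratic cost `J = Σ_k (x(k)^H Q x(k) + u(k)^H R u(k))`, valued in `[0,∞]`. -/
def cost (Q : Matrix (Fin n) (Fin n) ℂ) (R : Matrix (Fin m) (Fin m) ℂ)
    (x : ℕ → Fin n → ℂ) (u : ℕ → Fin m → ℂ) : ℝ≥0∞ :=
  ∑' k : ℕ, ENNReal.ofReal ((star (x k) ⬝ᵥ (Q *ᵥ x k)).re + (star (u k) ⬝ᵥ (R *ᵥ u k)).re)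

/-- The LQR problem for the antilinear system is solvable: for every initial condition
there is a control of finite cost minimizing the cost. -/
def LQRSolvable (A₂ : Matrix (Fin n) (Fin n) ℂ) (B₂ : Matrix (Fin n) (Fin m) ℂ)
    (Q : Matrix (Fin n) (Fin n) ℂ) (R : Matrix (Fin m) (Fin m) ℂ) : Prop :=
  ∀ x₀ : Fin n → ℂ, ∃ u : ℕ → Fin m → ℂ,
    cost Q R (atraj A₂ B₂ x₀ u) u < ⊤ ∧
    ∀ u' : ℕ → Fin m → ℂ, cost Q R (atraj A₂ B₂ x₀ u) u ≤ cost Q R (atraj A₂ B₂ x₀ u') u'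

/-- The anti-Riccati equation
`-Q = A₂^H P^# A₂ - A₂^H P^# B₂ (R + B₂^H P^# B₂)⁻¹ B₂^H P^# A₂ - P`. -/
def AntiRiccati (A₂ : Matrix (Fin n) (Fin n) ℂ) (B₂ : Matrix (Fin n) (Fin m) ℂ)
    (Q : Matrix (Fin n) (Fin n) ℂ) (R : Matrix (Fin m) (Fin m) ℂ)
    (P : Matrix (Fin n) (Fin n) ℂ) : Prop :=
  -Q = A₂ᴴ * mconj P * A₂ -
      A₂ᴴ * mconj P * B₂ * (R + B₂ᴴ * mconj P * B₂)⁻¹ * (B₂ᴴ * mconj P * A₂) - P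

/-- `Q₀ = Q⁻¹ + (A₂ Q⁻¹ A₂^H)^# + (B₂ R⁻¹ B₂^H)^#`. -/
def Qzero (A₂ : Matrix (Fin n) (Fin n) ℂ) (B₂ : Matrix (Fin n) (Fin m) ℂ)
    (Q : Matrix (Fin n) (Fin n) ℂ) (R : Matrix (Fin m) (Fin m) ℂ) :
    Matrix (Fin n) (Fin n) ℂ :=
  Q⁻¹ + mconj (A₂ * Q⁻¹ * A₂ᴴ) + mconj (B₂ * R⁻¹ * B₂ᴴ)

/-! By the Woodbury identity, the anti-Riccati equation says exactly that
`P = Q + A₂ᴴ S⁻¹ A₂` with `S = P^{-#} + B₂ R⁻¹ B₂ᴴ`. Applying Woodbury once more to this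
expression for `P` gives `Q⁻¹ A₂ᴴ (S + A₂ Q⁻¹ A₂ᴴ)⁻¹ A₂ Q⁻¹ = Q⁻¹ - P⁻¹`. Since
`X^# = s^{-#} (S + A₂ Q⁻¹ A₂ᴴ) s^{-#}`, the `s^{-#}` factors cancel in `Aᴴ X^{-#} A`, which is
therefore `s⁻¹ (Q⁻¹ - P⁻¹) s⁻¹`; adding `X` gives `s⁻¹ Q₀ s⁻¹ = s⁻¹ s s s⁻¹ = 1`. -/

section Woodbury

variable {ι κ α : Type*} [Fintype ι] [DecidableEq ι] [Fintype κ] [DecidableEq κ] [CommRing α]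

theorem Matrix.inv_add_mul_inv_mul_eq_sub {P : Matrix ι ι α} {R : Matrix κ κ α}
    (U : Matrix ι κ α) (V : Matrix κ ι α) (hP : IsUnit P) (hR : IsUnit R)
    (hRP : IsUnit (R + V * P * U)) :
    (P⁻¹ + U * R⁻¹ * V)⁻¹ = P - P * U * (R + V * P * U)⁻¹ * V * P := by
  have hPP : P⁻¹⁻¹ = P := nonsing_inv_nonsing_inv P ((isUnit_iff_isUnit_det P).mp hP)
  have hRR : R⁻¹⁻¹ = R := nonsing_inv_nonsing_inv R ((isUnit_iff_isUnit_det R).mp hR)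
  rw [add_mul_mul_inv_eq_sub _ _ _ _ (isUnit_nonsing_inv_iff.mpr hP)
    (isUnit_nonsing_inv_iff.mpr hR) (by rwa [hPP, hRR]), hPP, hRR]

end Woodbury

section mconj

variable {k l o : Type*}

theorem mconj_eq_conjTranspose_transpose (A : Matrix k l ℂ) : mconj A = Aᴴᵀ := rfl

theorem mconj_mconj (A : Matrix k l ℂ) : mconj (mconj A) = A := by
  ext i j
  simp [mconj]

theorem mconj_add (A B : Matrix k l ℂ) : mconj (A + B) = mconj A + mconj B :=
  Matrix.map_add _ (map_add _) A B

theorem mconj_mul [Fintype l] (A : Matrix k l ℂ) (B : Matrix l o ℂ) :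
    mconj (A * B) = mconj A * mconj B :=
  Matrix.map_mul

theorem mconj_inv [Fintype k] [DecidableEq k] (A : Matrix k k ℂ) : mconj A⁻¹ = (mconj A)⁻¹ := by
  simp only [mconj_eq_conjTranspose_transpose, conjTranspose_nonsing_inv, transpose_nonsing_inv]

theorem Matrix.IsHermitian.mconj_eq_transpose {A : Matrix k k ℂ} (hA : A.IsHermitian) :
    mconj A = Aᵀ := by
  rw [mconj_eq_conjTranspose_transpose, hA.eq]

theorem Matrix.IsHermitian.mconj {A : Matrix k k ℂ} (hA : A.IsHermitian) :
    (mconj A).IsHermitian := by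
  rw [hA.mconj_eq_transpose]
  exact hA.transpose

theorem Matrix.PosSemidef.mconj [Fintype k] {A : Matrix k k ℂ} (hA : A.PosSemidef) :
    (mconj A).PosSemidef := by
  rw [hA.isHermitian.mconj_eq_transpose]
  exact hA.transpose

theorem Matrix.PosDef.mconj [Fintype k] {A : Matrix k k ℂ} (hA : A.PosDef) :
    (mconj A).PosDef := by
  rw [hA.isHermitian.mconj_eq_transpose]
  exact hA.transpose

theorem conjTranspose_mul_mconj_inv_mul_congr [Fintype k] [DecidableEq k]
    {s : Matrix k k ℂ} (hs : s.IsHermitian) (hsu : IsUnit s) (K Y : Matrix k k ℂ) :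
    ((mconj s)⁻¹ * K * s⁻¹)ᴴ * (mconj (s⁻¹ * Y * s⁻¹))⁻¹ * ((mconj s)⁻¹ * K * s⁻¹) =
      s⁻¹ * (Kᴴ * (mconj Y)⁻¹ * K) * s⁻¹ := by
  have hsc : IsUnit (mconj s).det := by
    rw [hs.mconj_eq_transpose, det_transpose, ← isUnit_iff_isUnit_det]
    exact hsu
  rw [conjTranspose_mul, conjTranspose_mul, conjTranspose_nonsing_inv, conjTranspose_nonsing_inv,
    hs.eq, hs.mconj.eq, mconj_mul, mconj_mul, mconj_inv, Matrix.mul_inv_rev, Matrix.mul_inv_rev,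
    nonsing_inv_nonsing_inv _ hsc]
  simp only [mul_assoc, nonsing_inv_mul_cancel_left (h := hsc),
    mul_nonsing_inv_cancel_left (h := hsc)]

end mconj

section AntiRiccati

variable {A₂ : Matrix (Fin n) (Fin n) ℂ} {B₂ : Matrix (Fin n) (Fin m) ℂ}
  {Q P : Matrix (Fin n) (Fin n) ℂ} {R : Matrix (Fin m) (Fin m) ℂ}

theorem antiRiccati_iff (hR : R.PosDef) (hP : P.PosDef) :
    AntiRiccati A₂ B₂ Q R P ↔ P = Q + A₂ᴴ * ((mconj P)⁻¹ + B₂ * R⁻¹ * B₂ᴴ)⁻¹ * A₂ := by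
  have hM : (R + B₂ᴴ * mconj P * B₂).PosDef :=
    hR.add_posSemidef (hP.mconj.posSemidef.conjTranspose_mul_mul_same B₂)
  rw [inv_add_mul_inv_mul_eq_sub B₂ B₂ᴴ hP.mconj.isUnit hR.isUnit hM.isUnit, AntiRiccati,
    neg_eq_iff_eq_neg, neg_sub, eq_sub_iff_add_eq, eq_comm]
  simp only [Matrix.mul_sub, Matrix.sub_mul, Matrix.mul_assoc]

theorem AntiRiccati.inv_sub_inv (hQ : Q.PosDef) (hR : R.PosDef) (hP : P.PosDef)
    (h : AntiRiccati A₂ B₂ Q R P) :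
    Q⁻¹ - P⁻¹ = Q⁻¹ * A₂ᴴ * ((mconj P)⁻¹ + A₂ * Q⁻¹ * A₂ᴴ + B₂ * R⁻¹ * B₂ᴴ)⁻¹ * A₂ * Q⁻¹ := by
  set S := (mconj P)⁻¹ + B₂ * R⁻¹ * B₂ᴴ
  have hS : S.PosDef :=
    hP.mconj.inv.add_posSemidef (hR.inv.posSemidef.mul_mul_conjTranspose_same B₂)
  have hT : (S + A₂ * Q⁻¹ * A₂ᴴ).PosDef :=
    hS.add_posSemidef (hQ.inv.posSemidef.mul_mul_conjTranspose_same A₂)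
  have hSS : S⁻¹⁻¹ = S := nonsing_inv_nonsing_inv S ((isUnit_iff_isUnit_det S).mp hS.isUnit)
  conv_lhs => rw [(antiRiccati_iff hR hP).mp h]
  rw [add_right_comm, add_mul_mul_inv_eq_sub Q A₂ᴴ S⁻¹ A₂ hQ.isUnit hS.inv.isUnit
    (by rw [hSS]; exact hT.isUnit), hSS, sub_sub_cancel]

end AntiRiccati

/-- If `P > 0` solves the anti-Riccati equation, then, with `s` the
(unique) Hermitian positive definite square root `Q₀^{1/2}` of `Q₀` and
`A = Q₀^{-#/2} A₂ Q⁻¹ Q₀^{-1/2}`, the matrix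
`X = Q₀^{-1/2}(P⁻¹ + (A₂Q⁻¹A₂^H)^# + (B₂R⁻¹B₂^H)^#)Q₀^{-1/2}` is Hermitian positive
definite and satisfies `X + A^H X^{-#} A = I`. -/
theorem antiRiccati_to_nonlinearEq
    (A₂ : Matrix (Fin n) (Fin n) ℂ) (B₂ : Matrix (Fin n) (Fin m) ℂ)
    (Q : Matrix (Fin n) (Fin n) ℂ) (R : Matrix (Fin m) (Fin m) ℂ)
    (hQ : Q.PosDef) (hR : R.PosDef)
    (P : Matrix (Fin n) (Fin n) ℂ) (hP : P.PosDef) (heq : AntiRiccati A₂ B₂ Q R P)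
    (s : Matrix (Fin n) (Fin n) ℂ) (hs : s.PosDef) (hsq : s * s = Qzero A₂ B₂ Q R)
    (A : Matrix (Fin n) (Fin n) ℂ) (hA : A = (mconj s)⁻¹ * A₂ * Q⁻¹ * s⁻¹)
    (X : Matrix (Fin n) (Fin n) ℂ)
    (hX : X = s⁻¹ * (P⁻¹ + mconj (A₂ * Q⁻¹ * A₂ᴴ) + mconj (B₂ * R⁻¹ * B₂ᴴ)) * s⁻¹) :
    X.PosDef ∧ X + Aᴴ * (mconj X)⁻¹ * A = 1 := by
  subst hA hX
  set Y := P⁻¹ + mconj (A₂ * Q⁻¹ * A₂ᴴ) + mconj (B₂ * R⁻¹ * B₂ᴴ)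
  have hY : Y.PosDef :=
    (hP.inv.add_posSemidef (hQ.inv.posSemidef.mul_mul_conjTranspose_same A₂).mconj)
      |>.add_posSemidef (hR.inv.posSemidef.mul_mul_conjTranspose_same B₂).mconj
  refine ⟨?_, ?_⟩
  · have h := (IsUnit.posDef_star_left_conjugate_iff hs.inv.isUnit (x := Y)).mpr hY
    rwa [star_eq_conjTranspose, hs.isHermitian.inv.eq] at h
  have hYc : mconj Y = (mconj P)⁻¹ + A₂ * Q⁻¹ * A₂ᴴ + B₂ * R⁻¹ * B₂ᴴ := by
    simp only [Y, mconj_add, mconj_inv, mconj_mconj]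
  have hK : (A₂ * Q⁻¹)ᴴ * (mconj Y)⁻¹ * (A₂ * Q⁻¹) = Q⁻¹ - P⁻¹ := by
    rw [heq.inv_sub_inv hQ hR hP, hYc, conjTranspose_mul, hQ.isHermitian.inv.eq]
    simp only [mul_assoc]
  have hQ₀ : Y + (Q⁻¹ - P⁻¹) = s * s := by
    rw [hsq, Qzero]
    simp only [Y]
    abel
  have ds : IsUnit s.det := (isUnit_iff_isUnit_det s).mp hs.isUnit
  rw [mul_assoc _ A₂, conjTranspose_mul_mconj_inv_mul_congr hs.isHermitian hs.isUnit, hK,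
    ← add_mul, ← mul_add, hQ₀, ← mul_assoc, nonsing_inv_mul _ ds, one_mul, mul_nonsing_inv _ ds]
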